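/- arXiv:math/0605021 — 7 statements merged into one kernel-verified Lean document; each statement's English description precedes it below -/
import Mathlib

section
/- For α = 7/4, the map f_α(x) = 1 - αx² has exactly 3 points of least period 3, and they are precisely the real roots of 343x³ - 98x² - 252x + 8. -/
/-- f(x) = 1 - (7/4)x² -/
noncomputable def f (x : ℝ) : ℝ := 1 - (7 / 4) * x ^ 2

private lemma key_id (x : ℝ) :
    f (f (f x)) - x = (f x - x) * (343 * x ^ 3 - 98 * x ^ 2 - 252 * x + 8) ^ 2 / 4096 := by
  simp only [f]; ring

private lemma cubic_factor {a b x : ℝ} (hab : a ≠ b)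
    (ha : 343 * a ^ 3 - 98 * a ^ 2 - 252 * a + 8 = 0)
    (hb : 343 * b ^ 3 - 98 * b ^ 2 - 252 * b + 8 = 0)
    (hx : 343 * x ^ 3 - 98 * x ^ 2 - 252 * x + 8 = 0) :
    x = a ∨ x = b ∨ x = 2 / 7 - a - b := by
  have h : (a - b) * (343 * ((x - a) * ((x - b) * (x - (2 / 7 - a - b))))) = 0 := by
    linear_combination (a - b) * hx + (a - x) * ha - (a - x) * hb - (a - b) * ha
  have hab' : a - b ≠ 0 := sub_ne_zero.mpr hab
  rcases mul_eq_zero.mp h with h | h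
  · exact absurd h hab'
  rcases mul_eq_zero.mp h with h | h
  · norm_num at h
  rcases mul_eq_zero.mp h with h | h
  · exact Or.inl (by linarith [sub_eq_zero.mp h])
  rcases mul_eq_zero.mp h with h | h
  · exact Or.inr (Or.inl (sub_eq_zero.mp h))
  · exact Or.inr (Or.inr (sub_eq_zero.mp h))

private lemma third_root {a b : ℝ} (hab : a ≠ b)
    (ha : 343 * a ^ 3 - 98 * a ^ 2 - 252 * a + 8 = 0)
    (hb : 343 * b ^ 3 - 98 * b ^ 2 - 252 * b + 8 = 0) :
    343 * (2 / 7 - a - b) ^ 3 - 98 * (2 / 7 - a - b) ^ 2 - 252 * (2 / 7 - a - b) + 8 = 0 := by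
  have hab' : a - b ≠ 0 := sub_ne_zero.mpr hab
  have h : (a - b) * (343 * (2 / 7 - a - b) ^ 3 - 98 * (2 / 7 - a - b) ^ 2
      - 252 * (2 / 7 - a - b) + 8) = 0 := by
    linear_combination (a - (2 / 7 - a - b)) * hb - (b - (2 / 7 - a - b)) * ha
  rcases mul_eq_zero.mp h with h | h
  · exact absurd h hab'
  · exact h

theorem period_three_at_seven_fourths :
    {x : ℝ | f (f (f x)) = x ∧ f x ≠ x}
      = {x : ℝ | 343 * x ^ 3 - 98 * x ^ 2 - 252 * x + 8 = 0} ∧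
    {x : ℝ | f (f (f x)) = x ∧ f x ≠ x}.encard = 3 := by
  set p : ℝ → ℝ := fun x => 343 * x ^ 3 - 98 * x ^ 2 - 252 * x + 8 with hp
  have hcont : ContinuousOn p (Set.univ : Set ℝ) := by fun_prop
  -- set equality
  have hset : {x : ℝ | f (f (f x)) = x ∧ f x ≠ x}
      = {x : ℝ | 343 * x ^ 3 - 98 * x ^ 2 - 252 * x + 8 = 0} := by
    ext x
    simp only [Set.mem_setOf_eq]
    constructor
    · rintro ⟨h1, h2⟩
      have := key_id x
      rw [h1, sub_self] at this
      have h3 : (f x - x) * (343 * x ^ 3 - 98 * x ^ 2 - 252 * x + 8) ^ 2 = 0 := by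
        linarith
      rcases mul_eq_zero.mp h3 with h | h
      · exact absurd (by linarith : f x = x) h2
      · exact pow_eq_zero_iff (by norm_num) |>.mp h
    · intro h
      constructor
      · have := key_id x
        rw [h] at this
        simp at this
        linarith
      · intro hfx
        have hq : 7 * x ^ 2 + 4 * x - 4 = 0 := by
          have : 1 - 7 / 4 * x ^ 2 = x := hfx
          linarith
        have : (16 : ℝ) = 0 := by
          linear_combination (-1/8 - x/16) * h + (-17/4 + 7/2 * x + 49/16 * x^2) * hq
        norm_num at this
  refine ⟨hset, ?_⟩
  rw [hset]
  -- find the three roots by IVT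
  obtain ⟨a, ha_mem, ha⟩ : ∃ a ∈ Set.Icc (-4/5 : ℝ) (-7/10), p a = 0 := by
    have h := intermediate_value_Icc (by norm_num : (-4/5 : ℝ) ≤ -7/10)
      (hcont.mono (Set.subset_univ _))
    have h0 : (0 : ℝ) ∈ Set.Icc (p (-4/5)) (p (-7/10)) := by
      simp only [hp]; norm_num
    obtain ⟨a, ham, hav⟩ := h h0
    exact ⟨a, ham, hav⟩
  obtain ⟨b, hb_mem, hb⟩ : ∃ b ∈ Set.Icc (0 : ℝ) (1/10), p b = 0 := by
    have h := intermediate_value_Icc' (by norm_num : (0 : ℝ) ≤ 1/10)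
      (hcont.mono (Set.subset_univ _))
    have h0 : (0 : ℝ) ∈ Set.Icc (p (1/10)) (p 0) := by
      simp only [hp]; norm_num
    obtain ⟨b, hbm, hbv⟩ := h h0
    exact ⟨b, hbm, hbv⟩
  obtain ⟨ha1, ha2⟩ := ha_mem
  obtain ⟨hb1, hb2⟩ := hb_mem
  set c : ℝ := 2 / 7 - a - b with hc
  have hab : a ≠ b := by intro h; rw [h] at ha2; linarith
  have hac : a ≠ c := by intro h; rw [hc] at h; nlinarith
  have hbc : b ≠ c := by intro h; rw [hc] at h; nlinarith
  have hpc : p c = 0 := third_root hab ha hb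
  rw [Set.encard_eq_three]
  refine ⟨a, b, c, hab, hac, hbc, ?_⟩
  ext x
  simp only [Set.mem_setOf_eq, Set.mem_insert_iff, Set.mem_singleton_iff]
  constructor
  · intro hx
    exact cubic_factor hab ha hb hx
  · rintro (rfl | rfl | rfl)
    · exact ha
    · exact hb
    · exact hpc
end

section
/- If for some α₀ > 0 the polynomial h(α₀, x) (in x) has a repeated real root (i.e., there is x₀ with h(α₀,x₀) = 0 and ∂h/∂x(α₀,x₀) = 0), then α₀ = 7/4. -/
/-!
Eliminating `x` from `h α x = 0` and `∂ₓh α x = 0` leaves `α (4α - 7)(16α² - 4α + 7) = 0`. The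
cubic factor vanishes exactly at the parameters where a 3-cycle of `f_α` has multiplier `1`; its
quadratic factor has no real root, and `α = 0` is impossible because `h 0 ≡ 1`.
-/

/-- h(α,x), the degree-6 factor of f_α³(x) - x -/
noncomputable def h (α x : ℝ) : ℝ :=
  α ^ 6 * x ^ 6 - α ^ 5 * x ^ 5 + (-3 * α ^ 5 + α ^ 4) * x ^ 4 + (2 * α ^ 4 - α ^ 3) * x ^ 3
    + (3 * α ^ 4 - 3 * α ^ 3 + α ^ 2) * x ^ 2 + (-α ^ 3 + 2 * α ^ 2 - α) * x
    - α ^ 3 + 2 * α ^ 2 - α + 1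

noncomputable def hDeriv (α x : ℝ) : ℝ :=
  6 * α ^ 6 * x ^ 5 - 5 * α ^ 5 * x ^ 4 + 4 * (-3 * α ^ 5 + α ^ 4) * x ^ 3
    + 3 * (2 * α ^ 4 - α ^ 3) * x ^ 2 + 2 * (3 * α ^ 4 - 3 * α ^ 3 + α ^ 2) * x
    + (-α ^ 3 + 2 * α ^ 2 - α)

theorem hasDerivAt_h (α x : ℝ) : HasDerivAt (h α) (hDeriv α x) x := by
  have hp (n : ℕ) (c : ℝ) : HasDerivAt (fun x : ℝ => c * x ^ n) (c * (n * x ^ (n - 1))) x :=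
    (hasDerivAt_pow n x).const_mul c
  have H := ((((((hp 6 (α ^ 6)).sub (hp 5 (α ^ 5))).add (hp 4 (-3 * α ^ 5 + α ^ 4))).add
    (hp 3 (2 * α ^ 4 - α ^ 3))).add (hp 2 (3 * α ^ 4 - 3 * α ^ 3 + α ^ 2))).add
    (hp 1 (-α ^ 3 + 2 * α ^ 2 - α))).add_const (-α ^ 3 + 2 * α ^ 2 - α + 1)
  refine HasDerivAt.congr_deriv (H.congr_of_eventuallyEq (.of_forall fun y => ?_)) ?_
  · simp only [h, Pi.add_apply, Pi.sub_apply]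
    ring
  · simp only [hDeriv]
    push_cast
    ring

theorem mul_eq_zero_of_h_eq_zero_of_hDeriv_eq_zero {α x : ℝ} (hroot : h α x = 0)
    (hder : hDeriv α x = 0) : α * ((4 * α - 7) * (16 * α ^ 2 - 4 * α + 7)) = 0 := by
  rw [h] at hroot
  rw [hDeriv] at hder
  -- Bezout cofactors, found in the coordinate `y = α x` that conjugates `f_α` to `y ↦ α - y²`
  set y := α * x
  linear_combination (α * (-49 - 8 * α + (-42 + 72 * α - 16 * α ^ 2) * y
      + (-32 * α + 96 * α ^ 2) * y ^ 2 - 16 * α * y ^ 3 - 96 * α * y ^ 4)) * hroot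
    + ((-15 * α + 8 * α ^ 2) + (7 + 8 * α - 24 * α ^ 2 + 16 * α ^ 3) * y + (7 - 16 * α) * y ^ 2
      + (8 * α - 32 * α ^ 2) * y ^ 3 + 16 * α * y ^ 5) * hder

theorem repeated_root_only_at_seven_fourths_general (α₀ : ℝ)
    (x₀ : ℝ) (hroot : h α₀ x₀ = 0) (hder : deriv (fun x => h α₀ x) x₀ = 0) :
    α₀ = 7 / 4 := by
  have hα₀ : α₀ ≠ 0 := by
    rintro rfl
    norm_num [h] at hroot
  rw [(hasDerivAt_h α₀ x₀).deriv] at hder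
  have hquad : 16 * α₀ ^ 2 - 4 * α₀ + 7 ≠ 0 := by nlinarith [sq_nonneg (8 * α₀ - 1)]
  have hlin : 4 * α₀ - 7 = 0 := by
    simpa [hα₀, hquad] using mul_eq_zero_of_h_eq_zero_of_hDeriv_eq_zero hroot hder
  linarith

theorem repeated_root_only_at_seven_fourths (α₀ : ℝ) (hα : 0 < α₀)
    (x₀ : ℝ) (hroot : h α₀ x₀ = 0) (hder : deriv (fun x => h α₀ x) x₀ = 0) :
    α₀ = 7 / 4 :=
  repeated_root_only_at_seven_fourths_general α₀ x₀ hroot hder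
end

section
/- The logistic map F_μ(x) = μx(1-x) with μ > 1 has a point of least period 3 if and only if (μ²-2μ)/4 ≥ 7/4, i.e., if and only if μ ≥ 1 + 2√2. -/
/-- the logistic map -/
noncomputable def F (μ x : ℝ) : ℝ := μ * x * (1 - x)

/-- every real cubic with leading coefficient 2 has a real root -/
lemma cubic_has_root (b c d : ℝ) : ∃ y : ℝ, 2*y^3 + b*y^2 + c*y + d = 0 := by
  have hcont : Continuous fun y : ℝ => 2*y^3 + b*y^2 + c*y + d := by continuity
  have htop : Filter.Tendsto (fun y : ℝ => 2*y^3 + b*y^2 + c*y + d)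
      Filter.atTop Filter.atTop := by
    apply Filter.tendsto_atTop_mono' _ _ Filter.tendsto_id
    filter_upwards [Filter.eventually_ge_atTop (1 + |b| + |c| + |d|)] with y hy
    have hb := abs_nonneg b
    have hc := abs_nonneg c
    have hd := abs_nonneg d
    have hb' := neg_abs_le b
    have hc' := neg_abs_le c
    have hd' := neg_abs_le d
    have hy1 : (1:ℝ) ≤ y := by linarith
    have hy0 : (0:ℝ) ≤ y := by linarith
    have hysq : (0:ℝ) ≤ y^2 - 1 := by nlinarith
    simp only [id]
    nlinarith [mul_nonneg hy0 hysq,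
      mul_nonneg (by linarith : (0:ℝ) ≤ y - (1 + |b| + |c| + |d|)) (sq_nonneg y),
      mul_nonneg (by linarith : (0:ℝ) ≤ b + |b|) (sq_nonneg y),
      mul_nonneg hc (by nlinarith : (0:ℝ) ≤ y^2 - y),
      mul_nonneg (by linarith : (0:ℝ) ≤ c + |c|) hy0,
      mul_nonneg hd hysq, sq_nonneg y]
  have hbot : Filter.Tendsto (fun y : ℝ => 2*y^3 + b*y^2 + c*y + d)
      Filter.atBot Filter.atBot := by
    apply Filter.tendsto_atBot_mono' _ _ Filter.tendsto_id
    filter_upwards [Filter.eventually_le_atBot (-(1 + |b| + |c| + |d|))] with y hy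
    have hb := abs_nonneg b
    have hc := abs_nonneg c
    have hd := abs_nonneg d
    have hb' := le_abs_self b
    have hc' := le_abs_self c
    have hd' := le_abs_self d
    have hc'' := neg_abs_le c
    have hy1 : y ≤ -1 := by linarith
    have hy0 : (0:ℝ) ≤ -y := by linarith
    have hysq : (0:ℝ) ≤ y^2 - 1 := by nlinarith
    simp only [id]
    nlinarith [mul_nonneg hy0 hysq,
      mul_nonneg (by linarith : (0:ℝ) ≤ -y - (1 + |b| + |c| + |d|)) (sq_nonneg y),
      mul_nonneg (by linarith : (0:ℝ) ≤ |b| - b) (sq_nonneg y),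
      mul_nonneg hc (by nlinarith : (0:ℝ) ≤ y^2 + y),
      mul_nonneg (by linarith : (0:ℝ) ≤ c + |c|) hy0,
      mul_nonneg hd hysq, sq_nonneg y]
  obtain ⟨y, hy⟩ := (hcont.surjective htop hbot) 0
  exact ⟨y, hy⟩

/-- the quadratic family g(y) = y² - c has a point of least period 3 when c ≥ 7/4 -/
lemma quad_exists (c : ℝ) (hc : 7/4 ≤ c) :
    ∃ y : ℝ, (((y^2 - c)^2 - c)^2 - c = y) ∧ y^2 - c ≠ y := by
  set s := Real.sqrt (4*c - 7) with hsdef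
  have hs : s^2 = 4*c - 7 := Real.sq_sqrt (by linarith)
  obtain ⟨y, hy⟩ := cubic_has_root (1+s) (-1-2*c+s) (c-2-c*s)
  have hQ : y^6 + y^5 + (1-3*c)*y^4 + (1-2*c)*y^3 + (3*c^2-3*c+1)*y^2
      + (c^2-2*c+1)*y + (-c^3+2*c^2-c+1) = 0 := by
    linear_combination (((2*y^3+y^2-(1+2*c)*y+(c-2)) - s*(y^2+y-c))/4) * hy
      + ((y^2+y-c)^2/4) * hs
  refine ⟨y, ?_, ?_⟩
  · linear_combination (y^2 - y - c) * hQ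
  · intro h1
    have hfix : y^2 - y - c = 0 := by linear_combination h1
    have h6 : 6*y + 4*c + 1 = 0 := by
      linear_combination hQ - (y^4+2*y^3+(3-2*c)*y^2+(4-2*c)*y+(c^2-2*c+5)) * hfix
    have hE : 16*c^2 - 4*c + 7 = 0 := by
      linear_combination 36*hfix - (6*y - 7 - 4*c)*h6
    nlinarith [sq_nonneg (8*c - 1)]

/-- if the quadratic family g(y) = y² - c has a point of least period 3 then c ≥ 7/4 -/
lemma quad_ge (c y : ℝ) (h3 : ((y^2 - c)^2 - c)^2 - c = y) (h1 : y^2 - c ≠ y) :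
    7/4 ≤ c := by
  by_contra h
  push_neg at h
  have hfix : y^2 - y - c ≠ 0 := fun hf => h1 (by linear_combination hf)
  have hQ : y^6 + y^5 + (1-3*c)*y^4 + (1-2*c)*y^3 + (3*c^2-3*c+1)*y^2
      + (c^2-2*c+1)*y + (-c^3+2*c^2-c+1) = 0 := by
    have hprod : (y^2 - y - c) * (y^6 + y^5 + (1-3*c)*y^4 + (1-2*c)*y^3
        + (3*c^2-3*c+1)*y^2 + (c^2-2*c+1)*y + (-c^3+2*c^2-c+1)) = 0 := by
      linear_combination h3
    rcases mul_eq_zero.mp hprod with h' | h'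
    · exact absurd h' hfix
    · exact h'
  have key : ((2*y-1)*(y^2+y-c) - 2)^2 + (7-4*c)*(y^2+y-c)^2 = 0 := by
    linear_combination 4*hQ
  by_cases hB : y^2 + y - c = 0
  · rw [hB] at key
    norm_num at key
  · nlinarith [sq_nonneg ((2*y-1)*(y^2+y-c) - 2),
      mul_pos (by linarith : (0:ℝ) < 7-4*c) (sq_pos_of_ne_zero hB)]

theorem logistic_period_three_iff (μ : ℝ) (hμ : 1 < μ) :
    ((∃ x : ℝ, F μ (F μ (F μ x)) = x ∧ F μ x ≠ x) ↔ (μ ^ 2 - 2 * μ) / 4 ≥ 7 / 4) ∧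
    ((μ ^ 2 - 2 * μ) / 4 ≥ 7 / 4 ↔ μ ≥ 1 + 2 * Real.sqrt 2) := by
  have hμ0 : μ ≠ 0 := by linarith
  have step : ∀ z : ℝ, μ/2 - μ * F μ z = (μ/2 - μ*z)^2 - (μ^2 - 2*μ)/4 := by
    intro z; simp only [F]; ring
  constructor
  · constructor
    · rintro ⟨x, h3, h1⟩
      have e : μ/2 - μ * F μ (F μ (F μ x)) = μ/2 - μ * x := by rw [h3]
      simp only [step] at e
      refine quad_ge ((μ^2 - 2*μ)/4) (μ/2 - μ*x) e ?_
      intro hh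
      apply h1
      rw [← step x] at hh
      have : μ * F μ x = μ * x := by linarith
      exact mul_left_cancel₀ hμ0 this
    · intro hc
      obtain ⟨y, hg3, hg1⟩ := quad_exists ((μ^2 - 2*μ)/4) hc
      refine ⟨1/2 - y/μ, ?_, ?_⟩
      · set x : ℝ := 1/2 - y/μ with hxdef
        have hy : μ/2 - μ*x = y := by rw [hxdef]; field_simp; ring
        have e : μ/2 - μ * F μ (F μ (F μ x)) = μ/2 - μ * x := by
          simp only [step]
          rw [hy, hg3]
        have : μ * F μ (F μ (F μ x)) = μ * x := by linear_combination -e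
        exact mul_left_cancel₀ hμ0 this
      · set x : ℝ := 1/2 - y/μ with hxdef
        intro h
        apply hg1
        have hy : μ/2 - μ*x = y := by rw [hxdef]; field_simp; ring
        have e : μ/2 - μ * F μ x = μ/2 - μ * x := by rw [h]
        rw [step x, hy] at e
        exact e
  · have hs2 : Real.sqrt 2 ^ 2 = 2 := Real.sq_sqrt (by norm_num)
    have hsn : (0:ℝ) ≤ Real.sqrt 2 := Real.sqrt_nonneg 2
    constructor
    · intro h
      by_contra hlt
      push_neg at hlt
      nlinarith [mul_pos (by linarith : (0:ℝ) < 1 + 2*Real.sqrt 2 - μ)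
        (by nlinarith : (0:ℝ) < 2*Real.sqrt 2 + μ - 1)]
    · intro h
      nlinarith
end

section
/- For a, c with ac > 0: if ac < 7/4 then S_{a,c}(x) = a - cx² has no points of least period 3; if ac = 7/4 it has exactly one period-3 orbit (exactly 3 points of least period 3); if ac > 7/4 it has exactly two period-3 orbits (exactly 6 points of least period 3). -/
/-- S_{a,c}(x) = a - cx² -/
noncomputable def S (a c x : ℝ) : ℝ := a - c * x ^ 2

private lemma cubic_eq_prod (A B D u1 u2 u3 : ℝ) (h12 : u1 ≠ u2) (h13 : u1 ≠ u3)
    (h23 : u2 ≠ u3)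
    (e1 : u1^3 + A*u1^2 + B*u1 + D = 0) (e2 : u2^3 + A*u2^2 + B*u2 + D = 0)
    (e3 : u3^3 + A*u3^2 + B*u3 + D = 0) :
    ∀ z : ℝ, z^3 + A*z^2 + B*z + D = (z - u1) * (z - u2) * (z - u3) := by
  have k12 : u1^2 + u1*u2 + u2^2 + A*(u1+u2) + B = 0 := by
    have h : (u1 - u2) * (u1^2 + u1*u2 + u2^2 + A*(u1+u2) + B) = 0 := by
      linear_combination e1 - e2
    exact (mul_eq_zero.1 h).resolve_left (sub_ne_zero.2 h12)
  have k13 : u1^2 + u1*u3 + u3^2 + A*(u1+u3) + B = 0 := by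
    have h : (u1 - u3) * (u1^2 + u1*u3 + u3^2 + A*(u1+u3) + B) = 0 := by
      linear_combination e1 - e3
    exact (mul_eq_zero.1 h).resolve_left (sub_ne_zero.2 h13)
  have hA : A = -(u1+u2+u3) := by
    have h : (u2 - u3) * (u1 + u2 + u3 + A) = 0 := by linear_combination k12 - k13
    have h' := (mul_eq_zero.1 h).resolve_left (sub_ne_zero.2 h23)
    linarith
  have hB : B = u1*u2 + u1*u3 + u2*u3 := by linear_combination k12 - (u1+u2)*hA
  have hD : D = -(u1*u2*u3) := by linear_combination e1 - u1^2*hA - u1*hB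
  intro z
  rw [hA, hB, hD]; ring

private lemma cubic_three_roots (A B D t0 t1 t2 t3 : ℝ)
    (h01 : t0 < t1) (h12 : t1 < t2) (h23 : t2 < t3)
    (s0 : t0^3 + A*t0^2 + B*t0 + D < 0) (s1 : 0 < t1^3 + A*t1^2 + B*t1 + D)
    (s2 : t2^3 + A*t2^2 + B*t2 + D < 0) (s3 : 0 < t3^3 + A*t3^2 + B*t3 + D) :
    ∃ u1 u2 u3 : ℝ, u1 < u2 ∧ u2 < u3 ∧
      ∀ z : ℝ, z^3 + A*z^2 + B*z + D = (z - u1) * (z - u2) * (z - u3) := by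
  have hcont : Continuous (fun z : ℝ => z^3 + A*z^2 + B*z + D) := by fun_prop
  obtain ⟨u1, hu1, hp1⟩ := intermediate_value_Ioo h01.le hcont.continuousOn ⟨s0, s1⟩
  obtain ⟨u2, hu2, hp2⟩ := intermediate_value_Ioo' h12.le hcont.continuousOn ⟨s2, s1⟩
  obtain ⟨u3, hu3, hp3⟩ := intermediate_value_Ioo h23.le hcont.continuousOn ⟨s2, s3⟩
  have o12 : u1 < u2 := hu1.2.trans hu2.1
  have o23 : u2 < u3 := hu2.2.trans hu3.1
  exact ⟨u1, u2, u3, o12, o23,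
    cubic_eq_prod A B D u1 u2 u3 o12.ne (o12.trans o23).ne o23.ne hp1 hp2 hp3⟩

private lemma encard_three (u1 u2 u3 : ℝ) (h12 : u1 ≠ u2) (h13 : u1 ≠ u3) (h23 : u2 ≠ u3) :
    ({u1, u2, u3} : Set ℝ).encard = 3 := by
  rw [Set.encard_insert_of_notMem (by simp [h12, h13]), Set.encard_pair h23]
  rfl

private lemma encard_six (u1 u2 u3 v1 v2 v3 : ℝ)
    (h12 : u1 ≠ u2) (h13 : u1 ≠ u3) (h14 : u1 ≠ v1) (h15 : u1 ≠ v2) (h16 : u1 ≠ v3)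
    (h23 : u2 ≠ u3) (h24 : u2 ≠ v1) (h25 : u2 ≠ v2) (h26 : u2 ≠ v3)
    (h34 : u3 ≠ v1) (h35 : u3 ≠ v2) (h36 : u3 ≠ v3)
    (h45 : v1 ≠ v2) (h46 : v1 ≠ v3) (h56 : v2 ≠ v3) :
    ({u1, u2, u3, v1, v2, v3} : Set ℝ).encard = 6 := by
  rw [Set.encard_insert_of_notMem (by simp [h12, h13, h14, h15, h16]),
    Set.encard_insert_of_notMem (by simp [h23, h24, h25, h26]),
    Set.encard_insert_of_notMem (by simp [h34, h35, h36]),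
    Set.encard_insert_of_notMem (by simp [h45, h46]),
    Set.encard_pair h56]
  rfl

private lemma quad_fix_pos (K z : ℝ) (h : z^2 + K = z) :
    0 < ((z^2+z+K)*(z-1/2)-1)^2 + (4*K+7)/4*(z^2+z+K)^2 := by
  have hQ : ((z^2+z+K)*(z-1/2)-1)^2 + (4*K+7)/4*(z^2+z+K)^2 = 4*z^2+2*z+1 := by
    linear_combination (z^4+2*z^3+2*z^2*K+3*z^2+2*z*K+4*z+K^2+2*K+1) * h
  rw [hQ]; nlinarith [sq_nonneg (2*z+1/2)]

private lemma quad_no_period3 (K z : ℝ) (hK : -(7/4) < K)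
    (h3 : (((z^2+K)^2+K)^2+K) = z) : z^2 + K = z := by
  have hQ : 0 < ((z^2+z+K)*(z-1/2)-1)^2 + (4*K+7)/4*(z^2+z+K)^2 := by
    rcases eq_or_ne (z^2+z+K) 0 with hq | hq
    · have hm : (z^2+z+K)*(z-1/2)-1 = -1 := by rw [hq]; ring
      rw [hm, hq]; norm_num
    · have h1 : 0 < (4*K+7)/4 := by linarith
      have h2 : 0 < (z^2+z+K)^2 := by positivity
      nlinarith [sq_nonneg ((z^2+z+K)*(z-1/2)-1)]
  have hfact : (z^2+K-z) * (((z^2+z+K)*(z-1/2)-1)^2 + (4*K+7)/4*(z^2+z+K)^2) = 0 := by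
    linear_combination h3
  have h0 := (mul_eq_zero.1 hfact).resolve_right hQ.ne'
  linarith [h0]

private lemma quad_set_eq (K : ℝ) :
    {z : ℝ | (((z^2+K)^2+K)^2+K) = z ∧ z^2+K ≠ z} =
    {z : ℝ | ((z^2+z+K)*(z-1/2)-1)^2 + (4*K+7)/4*(z^2+z+K)^2 = 0} := by
  ext z
  simp only [Set.mem_setOf_eq]
  constructor
  · rintro ⟨h3, h1⟩
    have hfact : (z^2+K-z) * (((z^2+z+K)*(z-1/2)-1)^2 + (4*K+7)/4*(z^2+z+K)^2) = 0 := by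
      linear_combination h3
    exact (mul_eq_zero.1 hfact).resolve_left (sub_ne_zero.2 h1)
  · intro hQ
    refine ⟨by linear_combination (z^2+K-z) * hQ, fun h1 => ?_⟩
    exact (quad_fix_pos K z h1).ne' hQ

private lemma quad_encard_three (K : ℝ) (hK : K = -(7/4)) :
    ({z : ℝ | (((z^2+K)^2+K)^2+K) = z ∧ z^2+K ≠ z}).encard = 3 := by
  obtain ⟨u1, u2, u3, hu12, hu23, hufac⟩ :=
    cubic_three_roots (1/2) (-9/4) (-1/8) (-2) (-1) 0 2
      (by norm_num) (by norm_num) (by norm_num)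
      (by norm_num) (by norm_num) (by norm_num) (by norm_num)
  have hZ : {z : ℝ | (((z^2+K)^2+K)^2+K) = z ∧ z^2+K ≠ z} = {u1, u2, u3} := by
    rw [quad_set_eq K]
    ext z
    simp only [Set.mem_setOf_eq, Set.mem_insert_iff, Set.mem_singleton_iff]
    have hQm : ((z^2+z+K)*(z-1/2)-1)^2 + (4*K+7)/4*(z^2+z+K)^2
        = ((z-u1)*(z-u2)*(z-u3))^2 := by
      rw [hK, ← hufac z]; ring
    rw [hQm, pow_eq_zero_iff (two_ne_zero), mul_eq_zero, mul_eq_zero,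
      sub_eq_zero, sub_eq_zero, sub_eq_zero, or_assoc]
  rw [hZ]
  exact encard_three u1 u2 u3 hu12.ne (hu12.trans hu23).ne hu23.ne

set_option maxHeartbeats 1000000 in
private lemma quad_encard_six (K : ℝ) (hK : K < -(7/4)) :
    ({z : ℝ | (((z^2+K)^2+K)^2+K) = z ∧ z^2+K ≠ z}).encard = 6 := by
  set d : ℝ := Real.sqrt (-(4*K)-7) with hddef
  have hd2 : d^2 = -(4*K)-7 := Real.sq_sqrt (by linarith)
  have hd0 : 0 < d := Real.sqrt_pos.2 (by linarith)
  set e : ℝ := Real.sqrt (d^2+8) with hedef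
  have he2 : e^2 = d^2+8 := Real.sq_sqrt (by positivity)
  have he0 : 0 < e := Real.sqrt_pos.2 (by positivity)
  have he2' : 2 < e := by nlinarith
  have hde : d < e := by nlinarith
  have hed : (e-d)*(e+d) = 8 := by linear_combination he2
  -- roots of z^2+z+K at (-(1+e))/2 and (e-1)/2
  have hqa : ((-(1+e))/2)^2 + ((-(1+e))/2) + K = 0 := by
    linear_combination he2/4 + hd2/4
  have hqb : ((e-1)/2)^2 + ((e-1)/2) + K = 0 := by
    linear_combination he2/4 + hd2/4
  have hq3 : ((1+e)/2)^2 + ((1+e)/2) + K = e + 1 := by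
    linear_combination he2/4 + hd2/4
  have hqal : ((1-e)/2)^2 + ((1-e)/2) + K = 1 - e := by
    linear_combination he2/4 + hd2/4
  -- the cubic p₋ : coefficients
  obtain ⟨u1, u2, u3, hu12, hu23, hufac⟩ :=
    cubic_three_roots ((1-d)/2) (K - (1+d)/2) (-(K/2) - 1 - d*K/2)
      ((-(1+e))/2) (-1) ((e-1)/2) ((1+e)/2)
      (by linarith) (by linarith) (by linarith)
      (by
        have v0 : ((-(1+e))/2)^3 + (1-d)/2*((-(1+e))/2)^2 + (K - (1+d)/2)*((-(1+e))/2)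
            + (-(K/2) - 1 - d*K/2) = -1 := by
          linear_combination ((-(1+e))/2 - (1+d)/2) * hqa
        rw [v0]; norm_num)
      (by
        have v1 : (-1:ℝ)^3 + (1-d)/2*(-1)^2 + (K - (1+d)/2)*(-1) + (-(K/2) - 1 - d*K/2)
            = -1 - K*(3+d)/2 := by ring
        rw [v1]
        nlinarith [mul_pos hd0 (show (0:ℝ) < -K by linarith)])
      (by
        have v2 : ((e-1)/2)^3 + (1-d)/2*((e-1)/2)^2 + (K - (1+d)/2)*((e-1)/2)
            + (-(K/2) - 1 - d*K/2) = -1 := by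
          linear_combination ((e-1)/2 - (1+d)/2) * hqb
        rw [v2]; norm_num)
      (by
        have v3 : ((1+e)/2)^3 + (1-d)/2*((1+e)/2)^2 + (K - (1+d)/2)*((1+e)/2)
            + (-(K/2) - 1 - d*K/2) = ((e+1)*(e-d))/2 - 1 := by
          linear_combination ((1+e)/2 - (1+d)/2) * hq3
        rw [v3]
        have h1 : ((e+1)*(e-d))*(e+d) = 8*(e+1) := by linear_combination (e+1)*hed
        have h8 : (e+1)*(e-d) > 2 := by nlinarith [h1, hde, he0, hd0]
        linarith)
  -- the cubic p₊
  obtain ⟨v1, v2, v3, hv12, hv23, hvfac⟩ :=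
    cubic_three_roots ((1+d)/2) (K - (1-d)/2) (-(K/2) - 1 + d*K/2)
      ((-(1+e))/2) ((1-e)/2) ((e-1)/2) ((1+e)/2)
      (by linarith) (by linarith) (by linarith)
      (by
        have v0 : ((-(1+e))/2)^3 + (1+d)/2*((-(1+e))/2)^2 + (K - (1-d)/2)*((-(1+e))/2)
            + (-(K/2) - 1 + d*K/2) = -1 := by
          linear_combination ((-(1+e))/2 - (1-d)/2) * hqa
        rw [v0]; norm_num)
      (by
        have va : ((1-e)/2)^3 + (1+d)/2*((1-e)/2)^2 + (K - (1-d)/2)*((1-e)/2)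
            + (-(K/2) - 1 + d*K/2) = ((e-1)*(e-d))/2 - 1 := by
          linear_combination ((1-e)/2 - (1-d)/2) * hqal
        rw [va]
        have h34 : 3*e > 4 + d := by nlinarith [he2, sq_nonneg (2*d-1), hd0, he0]
        have h1 : ((e-1)*(e-d))*(e+d) = 8*(e-1) := by linear_combination (e-1)*hed
        have h8 : (e-1)*(e-d) > 2 := by nlinarith [h1, h34, hde, hd0, he2']
        linarith)
      (by
        have v2' : ((e-1)/2)^3 + (1+d)/2*((e-1)/2)^2 + (K - (1-d)/2)*((e-1)/2)
            + (-(K/2) - 1 + d*K/2) = -1 := by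
          linear_combination ((e-1)/2 - (1-d)/2) * hqb
        rw [v2']; norm_num)
      (by
        have v3' : ((1+e)/2)^3 + (1+d)/2*((1+e)/2)^2 + (K - (1-d)/2)*((1+e)/2)
            + (-(K/2) - 1 + d*K/2) = ((e+1)*(e+d))/2 - 1 := by
          linear_combination ((1+e)/2 - (1-d)/2) * hq3
        rw [v3']
        have h6 : (e+1)*(e+d) > 6 := by nlinarith [he2', hd0]
        linarith)
  -- no common roots
  have hcross : ∀ w : ℝ, (w-u1)*(w-u2)*(w-u3) = 0 → (w-v1)*(w-v2)*(w-v3) = 0 → False := by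
    intro w hu hv
    have hpm : w^3 + (1-d)/2*w^2 + (K - (1+d)/2)*w + (-(K/2) - 1 - d*K/2) = 0 := by
      rw [hufac w]; exact hu
    have hpp : w^3 + (1+d)/2*w^2 + (K - (1-d)/2)*w + (-(K/2) - 1 + d*K/2) = 0 := by
      rw [hvfac w]; exact hv
    have hq : w^2 + w + K = 0 := by
      have h : d * (w^2 + w + K) = 0 := by linear_combination hpp - hpm
      exact (mul_eq_zero.1 h).resolve_left hd0.ne'
    have hm1 : (-1 : ℝ) = 0 := by
      linear_combination hpm - (w - (1+d)/2) * hq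
    norm_num at hm1
  have hZ : {z : ℝ | (((z^2+K)^2+K)^2+K) = z ∧ z^2+K ≠ z}
      = {u1, u2, u3, v1, v2, v3} := by
    rw [quad_set_eq K]
    ext z
    simp only [Set.mem_setOf_eq, Set.mem_insert_iff, Set.mem_singleton_iff]
    have hQfac : ((z^2+z+K)*(z-1/2)-1)^2 + (4*K+7)/4*(z^2+z+K)^2
        = ((z-u1)*(z-u2)*(z-u3)) * ((z-v1)*(z-v2)*(z-v3)) := by
      rw [← hufac z, ← hvfac z]
      linear_combination ((z^2+z+K)^2/4) * hd2
    rw [hQfac]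
    simp only [mul_eq_zero, sub_eq_zero]
    tauto
  rw [hZ]
  have r1 : (u1-u1)*(u1-u2)*(u1-u3) = 0 := by rw [sub_self, zero_mul, zero_mul]
  have r2 : (u2-u1)*(u2-u2)*(u2-u3) = 0 := by rw [sub_self, mul_zero, zero_mul]
  have r3 : (u3-u1)*(u3-u2)*(u3-u3) = 0 := by rw [sub_self, mul_zero]
  have s1 : (v1-v1)*(v1-v2)*(v1-v3) = 0 := by rw [sub_self, zero_mul, zero_mul]
  have s2 : (v2-v1)*(v2-v2)*(v2-v3) = 0 := by rw [sub_self, mul_zero, zero_mul]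
  have s3 : (v3-v1)*(v3-v2)*(v3-v3) = 0 := by rw [sub_self, mul_zero]
  exact encard_six u1 u2 u3 v1 v2 v3 hu12.ne (hu12.trans hu23).ne
    (fun h => hcross u1 r1 (by rw [h]; exact s1))
    (fun h => hcross u1 r1 (by rw [h]; exact s2))
    (fun h => hcross u1 r1 (by rw [h]; exact s3))
    hu23.ne
    (fun h => hcross u2 r2 (by rw [h]; exact s1))
    (fun h => hcross u2 r2 (by rw [h]; exact s2))
    (fun h => hcross u2 r2 (by rw [h]; exact s3))
    (fun h => hcross u3 r3 (by rw [h]; exact s1))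
    (fun h => hcross u3 r3 (by rw [h]; exact s2))
    (fun h => hcross u3 r3 (by rw [h]; exact s3))
    hv12.ne (hv12.trans hv23).ne hv23.ne

theorem period_three_classification_S (a c : ℝ) (hac : 0 < a * c) :
    (a * c < 7 / 4 → ¬ ∃ x : ℝ, S a c (S a c (S a c x)) = x ∧ S a c x ≠ x) ∧
    (a * c = 7 / 4 → {x : ℝ | S a c (S a c (S a c x)) = x ∧ S a c x ≠ x}.encard = 3) ∧
    (7 / 4 < a * c → {x : ℝ | S a c (S a c (S a c x)) = x ∧ S a c x ≠ x}.encard = 6) := by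
  have hc : c ≠ 0 := by
    intro h; rw [h, mul_zero] at hac; exact lt_irrefl 0 hac
  set K : ℝ := -(a*c) with hKdef
  have hstep : ∀ x : ℝ, -c * S a c x = (-c*x)^2 + K := by
    intro x; rw [hKdef]; simp only [S]; ring
  have h3iff : ∀ x : ℝ,
      (S a c (S a c (S a c x)) = x ↔ ((((-c*x)^2+K)^2+K)^2+K) = -c*x) := by
    intro x
    have e : -c * S a c (S a c (S a c x)) = (((-c*x)^2+K)^2+K)^2+K := by
      rw [hstep, hstep, hstep]
    constructor
    · intro h; rw [h] at e; exact e.symm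
    · intro h; exact mul_left_cancel₀ (neg_ne_zero.2 hc) (e.trans h)
  have h1iff : ∀ x : ℝ, (S a c x = x ↔ ((-c*x)^2+K) = -c*x) := by
    intro x
    constructor
    · intro h; rw [← hstep, h]
    · intro h; exact mul_left_cancel₀ (neg_ne_zero.2 hc) ((hstep x).trans h)
  have hpre : {x : ℝ | S a c (S a c (S a c x)) = x ∧ S a c x ≠ x} =
      (fun x : ℝ => -c*x) ⁻¹' {z : ℝ | (((z^2+K)^2+K)^2+K) = z ∧ z^2+K ≠ z} := by
    ext x
    simp only [Set.mem_setOf_eq, Set.mem_preimage]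
    exact and_congr (h3iff x) (not_congr (h1iff x))
  have hencard : ∀ n : ℕ∞,
      ({z : ℝ | (((z^2+K)^2+K)^2+K) = z ∧ z^2+K ≠ z}).encard = n →
      ({x : ℝ | S a c (S a c (S a c x)) = x ∧ S a c x ≠ x}).encard = n := by
    intro n h
    have hinj : Function.Injective (fun x : ℝ => -c*x) :=
      fun x y hxy => by
        have : -c * x = -c * y := hxy
        exact mul_left_cancel₀ (neg_ne_zero.2 hc) this
    have hsurj : Function.Surjective (fun x : ℝ => -c*x) := by
      intro y; exact ⟨y / -c, by field_simp⟩
    rw [hpre, ← hinj.encard_image, Set.image_preimage_eq _ hsurj]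
    exact h
  refine ⟨?_, ?_, ?_⟩
  · rintro hlt ⟨x, h3, h1⟩
    have hz3 := (h3iff x).1 h3
    have hfix := quad_no_period3 K (-c*x) (by rw [hKdef]; linarith) hz3
    exact h1 ((h1iff x).2 hfix)
  · intro heq
    exact hencard 3 (quad_encard_three K (by rw [hKdef, heq]))
  · intro hgt
    exact hencard 6 (quad_encard_six K (by rw [hKdef]; linarith))
end

section
/- The map T(x) = √7 - (√7/2)(1+x²) has a point bifurcation of period-3 orbit at c = √7/2: T_{√7,c}(x) = √7 - c(1+x²) has a point of least period 3 when c = √7/2, but for every c > 0 with c ≠ √7/2, T_{√7,c} has no points of least period 3. -/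
/-- T_{a,c}(x) = a - c(1 + x²) -/
noncomputable def T (a c x : ℝ) : ℝ := a - c * (1 + x ^ 2)

/-- The degree-6 factor of T³(x) - x after dividing by T(x) - x, in scaled
coordinates y = c·x with α = c(a - c). -/
noncomputable def myq (a y : ℝ) : ℝ :=
  y ^ 6 - y ^ 5 + (1 - 3 * a) * y ^ 4 + (2 * a - 1) * y ^ 3 + (3 * a ^ 2 - 3 * a + 1) * y ^ 2
    - (a - 1) ^ 2 * y + (1 - a + 2 * a ^ 2 - a ^ 3)

lemma myq_sos (a y : ℝ) :
    myq a y = (y ^ 3 - y ^ 2 / 2 - (a + 1 / 2) * y + (1 - a / 2)) ^ 2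
      + (7 - 4 * a) * ((y ^ 2 - y - a) / 2) ^ 2 := by
  unfold myq; ring

lemma myq_pos (a y : ℝ) (h : a < 7 / 4) : 0 < myq a y := by
  rw [myq_sos]
  rcases eq_or_ne (y ^ 2 - y - a) 0 with hz | hz
  · have hW : y ^ 3 - y ^ 2 / 2 - (a + 1 / 2) * y + (1 - a / 2) = 1 := by
      linear_combination (y + 1 / 2) * hz
    rw [hW, hz]
    norm_num
  · have h1 : 0 < (y ^ 2 - y - a) ^ 2 := by positivity
    nlinarith [sq_nonneg (y ^ 3 - y ^ 2 / 2 - (a + 1 / 2) * y + (1 - a / 2))]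

lemma T_iter3_factor (s c x : ℝ) :
    T s c (T s c (T s c x)) - x = (T s c x - x) * myq (c * (s - c)) (c * x) := by
  unfold T myq; ring

theorem point_bifurcation_at_sqrt7_half :
    (∃ x : ℝ, T (Real.sqrt 7) (Real.sqrt 7 / 2) (T (Real.sqrt 7) (Real.sqrt 7 / 2)
        (T (Real.sqrt 7) (Real.sqrt 7 / 2) x)) = x ∧ T (Real.sqrt 7) (Real.sqrt 7 / 2) x ≠ x) ∧
    (∀ c : ℝ, 0 < c → c ≠ Real.sqrt 7 / 2 →
      ¬ ∃ x : ℝ, T (Real.sqrt 7) c (T (Real.sqrt 7) c (T (Real.sqrt 7) c x)) = x ∧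
        T (Real.sqrt 7) c x ≠ x) := by
  set s := Real.sqrt 7 with hsdef
  have hs : s ^ 2 = 7 := Real.sq_sqrt (by norm_num)
  have hspos : 0 < s := Real.sqrt_pos.2 (by norm_num)
  constructor
  · -- existence of a least-period-3 point at c = √7/2
    -- find a root of the cubic y³ - y²/2 - 9/4·y + 1/8 in [0,1]
    obtain ⟨y, hy01, hy⟩ : ∃ y ∈ Set.Icc (0 : ℝ) 1,
        y ^ 3 - y ^ 2 / 2 - 9 / 4 * y + 1 / 8 = 0 := by
      have hcont : ContinuousOn (fun y : ℝ => y ^ 3 - y ^ 2 / 2 - 9 / 4 * y + 1 / 8)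
          (Set.Icc 0 1) := by fun_prop
      have hsub := intermediate_value_Icc' (by norm_num : (0 : ℝ) ≤ 1) hcont
      have h0 : (0 : ℝ) ∈ Set.Icc ((fun y : ℝ => y ^ 3 - y ^ 2 / 2 - 9 / 4 * y + 1 / 8) 1)
          ((fun y : ℝ => y ^ 3 - y ^ 2 / 2 - 9 / 4 * y + 1 / 8) 0) := by
        constructor <;> norm_num
      obtain ⟨y, hy01, hy⟩ := hsub h0
      exact ⟨y, hy01, hy⟩
    refine ⟨2 * y / s, ?_, ?_⟩
    · -- T³ x = x
      have hcx : s / 2 * (2 * y / s) = y := by field_simp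
      have hfac := T_iter3_factor s (s / 2) (2 * y / s)
      have ha : s / 2 * (s - s / 2) = 7 / 4 := by
        have : s / 2 * (s - s / 2) = s ^ 2 / 4 := by ring
        rw [this, hs]
      rw [hcx, ha] at hfac
      have hq0 : myq (7 / 4) y = 0 := by
        rw [myq_sos]
        have : y ^ 3 - y ^ 2 / 2 - (7 / 4 + 1 / 2) * y + (1 - 7 / 4 / 2) = 0 := by
          linear_combination hy
        rw [this]; ring
      rw [hq0, mul_zero, sub_eq_zero] at hfac
      exact hfac
    · -- not a fixed point
      intro hfix
      have hcx : s / 2 * (2 * y / s) = y := by field_simp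
      -- from T x = x derive y² + y - 7/4 = 0
      have hx : s - s / 2 * (1 + (2 * y / s) ^ 2) = 2 * y / s := hfix
      have he1 : y ^ 2 + y - 7 / 4 = 0 := by
        have h2 : s * (s - s / 2 * (1 + (2 * y / s) ^ 2)) = s * (2 * y / s) := by rw [hx]
        have hs' : s ≠ 0 := ne_of_gt hspos
        field_simp at h2
        nlinarith [h2, hs, hspos]
      have h5 : y - 5 / 2 = 0 := by linear_combination hy - (y - 3 / 2) * he1
      have := hy01.2
      linarith [h5, hy01.2]
  · -- no least-period-3 points for c ≠ √7/2
    rintro c hc hne ⟨x, h3, h1⟩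
    have ha : c * (s - c) < 7 / 4 := by
      have hne' : s / 2 - c ≠ 0 := by
        intro h; apply hne; linarith [sub_eq_zero.1 h]
      have hsq : 0 < (s / 2 - c) ^ 2 := by positivity
      nlinarith [hsq, hs]
    have hq := myq_pos (c * (s - c)) (c * x) ha
    have hfac := T_iter3_factor s c x
    rw [sub_eq_zero.2 h3] at hfac
    have : T s c x - x = 0 := by
      by_contra h
      exact h (by
        have := mul_eq_zero.1 hfac.symm
        rcases this with h' | h'
        · exact h'
        · exact absurd h' (ne_of_gt hq))
    exact h1 (sub_eq_zero.1 this)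
end

section
/- For any α₀ > 7/4 and any real root x₀ of h(α₀, x), we have ∂h/∂x(α₀, x₀) ≠ 0; hence by the implicit function theorem each of the 6 period-3 points of f_{α₀} continues smoothly in α for α > 7/4. -/
noncomputable def hDerivX (α x : ℝ) : ℝ :=
  6 * α ^ 6 * x ^ 5 - 5 * α ^ 5 * x ^ 4 + 4 * (-3 * α ^ 5 + α ^ 4) * x ^ 3
    + 3 * (2 * α ^ 4 - α ^ 3) * x ^ 2 + 2 * (3 * α ^ 4 - 3 * α ^ 3 + α ^ 2) * x
    + (-α ^ 3 + 2 * α ^ 2 - α)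

theorem deriv_h (α x : ℝ) : deriv (fun x => h α x) x = hDerivX α x := by
  unfold h
  simp (disch := fun_prop) only [neg_mul, deriv_fun_add, deriv_fun_sub, deriv_fun_mul,
    deriv_fun_pow, Nat.cast_ofNat, Nat.add_one_sub_one, deriv_const', mul_zero, zero_mul,
    deriv_id'', mul_one, zero_add, add_zero, sub_self, pow_one, deriv_const_mul_id', sub_zero,
    hDerivX, add_left_inj]
  ring

theorem h_bezout (α x : ℝ) :
    (8 * α + 49 + α * (16 * α ^ 2 - 72 * α + 42) * x - 32 * α ^ 3 * (3 * α - 1) * x ^ 2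
        + 16 * α ^ 4 * x ^ 3 + 96 * α ^ 5 * x ^ 4) * h α x
      + (15 - 8 * α - (16 * α ^ 3 - 24 * α ^ 2 + 8 * α + 7) * x + α * (16 * α - 7) * x ^ 2
        + 8 * α ^ 3 * (4 * α - 1) * x ^ 3 - 16 * α ^ 5 * x ^ 5) * hDerivX α x
      = -((4 * α - 7) * (16 * α ^ 2 - 4 * α + 7)) := by
  unfold h hDerivX
  ring

theorem simple_roots_above_seven_fourths (α₀ : ℝ) (hα : 7 / 4 < α₀)
    (x₀ : ℝ) (hroot : h α₀ x₀ = 0) :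
    deriv (fun x => h α₀ x) x₀ ≠ 0 := by
  rw [deriv_h]
  intro hderiv
  have hbezout := h_bezout α₀ x₀
  rw [hroot, hderiv, mul_zero, mul_zero, zero_add] at hbezout
  have hpos : 0 < (4 * α₀ - 7) * (16 * α₀ ^ 2 - 4 * α₀ + 7) :=
    mul_pos (by linarith) (by nlinarith [sq_nonneg (8 * α₀ - 1)])
  linarith
end

section
/- The cubic polynomial 343x³ - 98x² - 252x + 8 has three distinct real roots, and each root x₀ satisfies f(f(f(x₀))) = x₀ and f(x₀) ≠ x₀, where f(x) = 1 - (7/4)x². -/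
private noncomputable def p (x : ℝ) : ℝ := 343 * x ^ 3 - 98 * x ^ 2 - 252 * x + 8

private lemma p_cont : Continuous p := by
  unfold p; continuity

private lemma exists_root (a b : ℝ) (hab : a ≤ b) (h1 : p a < 0) (h2 : 0 < p b) :
    ∃ x ∈ Set.Ioo a b, p x = 0 := by
  have := intermediate_value_Ioo hab p_cont.continuousOn (a := a) (b := b)
  have h0 : (0 : ℝ) ∈ Set.Ioo (p a) (p b) := ⟨h1, h2⟩
  obtain ⟨x, hx, hx0⟩ := this h0
  exact ⟨x, hx, hx0⟩

private lemma exists_root' (a b : ℝ) (hab : a ≤ b) (h1 : 0 < p a) (h2 : p b < 0) :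
    ∃ x ∈ Set.Ioo a b, p x = 0 := by
  have := intermediate_value_Ioo' hab p_cont.continuousOn (a := a) (b := b)
  have h0 : (0 : ℝ) ∈ Set.Ioo (p b) (p a) := ⟨h2, h1⟩
  obtain ⟨x, hx, hx0⟩ := this h0
  exact ⟨x, hx, hx0⟩

private lemma root_mem {a b c x : ℝ} (ha : p a = 0) (hb : p b = 0) (hc : p c = 0)
    (hab : a < b) (hbc : b < c) (hx : p x = 0) : x = a ∨ x = b ∨ x = c := by
  unfold p at ha hb hc hx
  by_cases hxa : x = a
  · exact Or.inl hxa
  by_cases hxb : x = b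
  · exact Or.inr (Or.inl hxb)
  right; right
  -- factor out (x - a): quadratic Qa(t) = 343 t² + (343a-98) t + 343a²-98a-252
  have qx : 343 * x ^ 2 + (343 * a - 98) * x + (343 * a ^ 2 - 98 * a - 252) = 0 := by
    have h1 : (x - a) * (343 * x ^ 2 + (343 * a - 98) * x + (343 * a ^ 2 - 98 * a - 252)) = 0 := by
      linear_combination hx - ha
    rcases mul_eq_zero.mp h1 with h | h
    · exact absurd (by linarith) hxa
    · exact h
  have qb : 343 * b ^ 2 + (343 * a - 98) * b + (343 * a ^ 2 - 98 * a - 252) = 0 := by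
    have h1 : (b - a) * (343 * b ^ 2 + (343 * a - 98) * b + (343 * a ^ 2 - 98 * a - 252)) = 0 := by
      linear_combination hb - ha
    rcases mul_eq_zero.mp h1 with h | h
    · exact absurd (by linarith) (ne_of_gt hab)
    · exact h
  have qc : 343 * c ^ 2 + (343 * a - 98) * c + (343 * a ^ 2 - 98 * a - 252) = 0 := by
    have h1 : (c - a) * (343 * c ^ 2 + (343 * a - 98) * c + (343 * a ^ 2 - 98 * a - 252)) = 0 := by
      linear_combination hc - ha
    rcases mul_eq_zero.mp h1 with h | h
    · exact absurd (by linarith) (ne_of_gt (hab.trans hbc))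
    · exact h
  -- factor out (x - b) from the quadratic
  have lx : 343 * x + 343 * b + 343 * a - 98 = 0 := by
    have h1 : (x - b) * (343 * x + 343 * b + 343 * a - 98) = 0 := by
      linear_combination qx - qb
    rcases mul_eq_zero.mp h1 with h | h
    · exact absurd (by linarith) hxb
    · exact h
  have lc : 343 * c + 343 * b + 343 * a - 98 = 0 := by
    have h1 : (c - b) * (343 * c + 343 * b + 343 * a - 98) = 0 := by
      linear_combination qc - qb
    rcases mul_eq_zero.mp h1 with h | h
    · exact absurd (by linarith) (ne_of_gt hbc)
    · exact h
  linarith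

theorem cubic_roots_form_period_three_orbit :
    {x : ℝ | 343 * x ^ 3 - 98 * x ^ 2 - 252 * x + 8 = 0}.encard = 3 ∧
    ∀ x₀ : ℝ, 343 * x₀ ^ 3 - 98 * x₀ ^ 2 - 252 * x₀ + 8 = 0 →
      f (f (f x₀)) = x₀ ∧ f x₀ ≠ x₀ := by
  constructor
  · obtain ⟨a, haI, ha⟩ := exists_root (-1) 0 (by norm_num) (by unfold p; norm_num)
      (by unfold p; norm_num)
    obtain ⟨b, hbI, hb⟩ := exists_root' 0 (1/10) (by norm_num) (by unfold p; norm_num)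
      (by unfold p; norm_num)
    obtain ⟨c, hcI, hc⟩ := exists_root (1/10) 2 (by norm_num) (by unfold p; norm_num)
      (by unfold p; norm_num)
    have hab : a < b := lt_trans haI.2 hbI.1
    have hbc : b < c := lt_trans hbI.2 hcI.1
    rw [Set.encard_eq_three]
    refine ⟨a, b, c, ne_of_lt hab, ne_of_lt (hab.trans hbc), ne_of_lt hbc, ?_⟩
    ext x
    simp only [Set.mem_setOf_eq, Set.mem_insert_iff, Set.mem_singleton_iff]
    constructor
    · intro hx
      exact root_mem ha hb hc hab hbc hx
    · rintro (rfl | rfl | rfl)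
      · exact ha
      · exact hb
      · exact hc
  · intro x₀ h
    constructor
    · unfold f
      linear_combination (1/512 - 65/1024 * x₀ + 35/1024 * x₀ ^ 2 + 441/2048 * x₀ ^ 3
        - 343/8192 * x₀ ^ 4 - 2401/16384 * x₀ ^ 5) * h
    · intro hfx
      have hq : 7 * x₀ ^ 2 + 4 * x₀ - 4 = 0 := by
        unfold f at hfx; linarith [hfx]
      have : (16 : ℝ) = 0 := by
        linear_combination (-1/8 - 1/16 * x₀) * h + (-17/4 + 7/2 * x₀ + 49/16 * x₀ ^ 2) * hq
      norm_num at this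
end
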